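/- For every γ ∈ (−1,1) there exists a function h : [0,∞) → ℝ which is continuous on [0,∞), twice continuously differentiable on (0,∞), positive and bounded on [0,∞), satisfies h(0) = 1, and solves the ordinary differential equation h''(z) + (γ/z + 1) h'(z) + (γ/(2z)) h(z) = 0 for every z > 0. -/

import Mathlib

/-! With `c = -γ/2`, the solution is `h(z) = e^{-z} J(z) / Γ(1-γ)`, where
`J(z) = ∫₀^∞ e^{-s} s^c (z+s)^c ds`.
Differentiating under the integral sign only lowers the exponent of `z + s`, and integrating
`d/ds [e^{-s} s^{c+1} (z+s)^{c-1}]` over `(0,∞)` yields a three-term recurrence between these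
integrals which is exactly the ODE. At `z = 0` the integral is `Γ(1-γ)`, the integrand is positive,
and `(z+s)^c` grows at most linearly in `z`, which `e^{-z}` absorbs. -/

open MeasureTheory Real Set Filter Topology

noncomputable section

def tricomiKernel (a b z s : ℝ) : ℝ := exp (-s) * s ^ a * (z + s) ^ b

/-- For `z > 0`, substituting `s = z t` gives
`tricomiIntegral a b z = Γ(a+1) z^(a+b+1) U(a+1, a+b+2, z)` with Tricomi's function `U`. -/
def tricomiIntegral (a b z : ℝ) : ℝ := ∫ s in Ioi 0, tricomiKernel a b z s

def heatProfile (γ z : ℝ) : ℝ :=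
  exp (-z) * tricomiIntegral (-(γ / 2)) (-(γ / 2)) z / Gamma (1 - γ)

end

lemma integrableOn_exp_neg_mul_rpow {a : ℝ} (ha : -1 < a) :
    IntegrableOn (fun s : ℝ => exp (-s) * s ^ a) (Ioi 0) := by
  simpa using GammaIntegral_convergent (show 0 < a + 1 by linarith)

lemma integral_exp_neg_mul_rpow_eq_Gamma {a : ℝ} (ha : -1 < a) :
    ∫ s in Ioi 0, exp (-s) * s ^ a = Gamma (a + 1) := by
  simp [Gamma_eq_integral (show 0 < a + 1 by linarith)]

lemma rpow_le_rpow_add_one_add {x y b : ℝ} (hx : 0 < x) (hxy : x ≤ y) (hb : b ≤ 1) :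
    y ^ b ≤ x ^ b + (1 + y) := by
  rcases le_or_gt b 0 with hb0 | hb0
  · linarith [rpow_le_rpow_of_nonpos hx hxy hb0]
  · have : y ^ b ≤ 1 + y := by
      rcases le_or_gt y 1 with hy | hy
      · linarith [rpow_le_one (hx.le.trans hxy) hy hb0.le]
      · linarith [(rpow_one y).symm.trans_ge (rpow_le_rpow_of_exponent_le hy.le hb)]
    linarith [rpow_nonneg hx.le b]

section Kernel

variable {a b z s : ℝ}

lemma tricomiKernel_pos (hz : 0 ≤ z) (hs : 0 < s) : 0 < tricomiKernel a b z s := by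
  have : 0 < z + s := by linarith
  unfold tricomiKernel
  positivity

lemma tricomiKernel_le {x : ℝ} (hs : 0 < s) (hx : 0 < x) (hxs : x ≤ z + s) (hb : b ≤ 1) :
    tricomiKernel a b z s ≤ (x ^ b + (1 + z)) * (exp (-s) * s ^ a) + exp (-s) * s ^ (a + 1) := by
  have hw : 0 ≤ exp (-s) * s ^ a := by positivity
  refine (mul_le_mul_of_nonneg_left (rpow_le_rpow_add_one_add hx hxs hb) hw).trans_eq ?_
  rw [rpow_add_one hs.ne']
  ring

lemma tricomiKernel_le_tricomiKernel {y : ℝ} (hb : b ≤ 0) (hs : 0 < s) (hy : 0 ≤ y) (hyz : y ≤ z) :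
    tricomiKernel a b z s ≤ tricomiKernel a b y s := by
  unfold tricomiKernel
  exact mul_le_mul_of_nonneg_left (rpow_le_rpow_of_nonpos (by linarith) (by linarith) hb)
    (by positivity)

lemma continuousOn_tricomiKernel (hz : 0 ≤ z) : ContinuousOn (tricomiKernel a b z) (Ioi 0) := by
  intro s (hs : 0 < s)
  refine ContinuousAt.continuousWithinAt ?_
  unfold tricomiKernel
  exact ((continuous_exp.comp continuous_neg).continuousAt.mul
    (continuousAt_rpow_const _ _ (Or.inl hs.ne'))).mul
    ((continuousAt_id.const_add z).rpow_const (Or.inl (by simp; linarith)))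

lemma aestronglyMeasurable_tricomiKernel (hz : 0 ≤ z) :
    AEStronglyMeasurable (tricomiKernel a b z) (volume.restrict (Ioi 0)) :=
  (continuousOn_tricomiKernel hz).aestronglyMeasurable measurableSet_Ioi

lemma integrableOn_tricomiKernel_of_pos (ha : -1 < a) (hb : b ≤ 1) (hz : 0 < z) :
    IntegrableOn (tricomiKernel a b z) (Ioi 0) := by
  refine Integrable.mono' (((integrableOn_exp_neg_mul_rpow ha).const_mul (z ^ b + (1 + z))).add
    (integrableOn_exp_neg_mul_rpow (a := a + 1) (by linarith)))
    (aestronglyMeasurable_tricomiKernel hz.le) ?_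
  filter_upwards [ae_restrict_mem measurableSet_Ioi] with s (hs : 0 < s)
  rw [norm_of_nonneg (tricomiKernel_pos hz.le hs).le]
  exact tricomiKernel_le hs hz (by linarith) hb

lemma integrableOn_tricomiKernel (ha : -1 < a) (hab : -1 < a + b) (hb : b ≤ 1) (hz : 0 ≤ z) :
    IntegrableOn (tricomiKernel a b z) (Ioi 0) := by
  refine Integrable.mono' ((integrableOn_exp_neg_mul_rpow hab).add
    (((integrableOn_exp_neg_mul_rpow ha).const_mul (1 + z)).add
    (integrableOn_exp_neg_mul_rpow (a := a + 1) (by linarith))))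
    (aestronglyMeasurable_tricomiKernel hz) ?_
  filter_upwards [ae_restrict_mem measurableSet_Ioi] with s (hs : 0 < s)
  rw [norm_of_nonneg (tricomiKernel_pos hz hs).le]
  refine (tricomiKernel_le hs hs (by linarith) hb).trans_eq ?_
  simp only [Pi.add_apply, rpow_add hs a b]
  ring

lemma hasDerivAt_tricomiKernel (hzs : 0 < z + s) :
    HasDerivAt (fun x => tricomiKernel a b x s) (b * tricomiKernel a (b - 1) z s) z := by
  refine ((((hasDerivAt_id z).add_const s).rpow_const (p := b) (Or.inl hzs.ne')).const_mul
    (exp (-s) * s ^ a)).congr_deriv ?_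
  simp only [tricomiKernel, id]
  ring

lemma hasDerivAt_tricomiKernel_add_one_sub_one (hs : 0 < s) (hzs : 0 < z + s) :
    HasDerivAt (tricomiKernel (a + 1) (b - 1) z)
      (-tricomiKernel a b z s + (z + a + b) * tricomiKernel a (b - 1) z s
        + (1 - b) * z * tricomiKernel a (b - 2) z s) s := by
  have hE := (hasDerivAt_neg s).exp
  have hP := hasDerivAt_rpow_const (p := a + 1) (Or.inl hs.ne')
  have hQ := ((hasDerivAt_id s).const_add z).rpow_const (p := b - 1) (Or.inl hzs.ne')
  refine ((hE.mul hP).mul hQ).congr_deriv ?_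
  have e₁ : (z + s) ^ (b - 1) = (z + s) ^ (b - 2) * (z + s) := by
    rw [← rpow_add_one hzs.ne']; ring_nf
  have e₀ : (z + s) ^ b = (z + s) ^ (b - 2) * (z + s) * (z + s) := by
    rw [← e₁, ← rpow_add_one hzs.ne']; ring_nf
  simp only [tricomiKernel, id, Pi.mul_apply, show a + 1 - 1 = a by ring, show b - 1 - 1 = b - 2 by ring,
    rpow_add_one hs.ne', e₀, e₁]
  ring

end Kernel

section Integral

variable {a b z : ℝ}

lemma tricomiIntegral_zero (hab : -1 < a + b) : tricomiIntegral a b 0 = Gamma (a + b + 1) := by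
  rw [tricomiIntegral, ← integral_exp_neg_mul_rpow_eq_Gamma hab]
  refine setIntegral_congr_fun measurableSet_Ioi fun s (hs : 0 < s) => ?_
  simp only [tricomiKernel, zero_add, mul_assoc, rpow_add hs]

lemma tricomiIntegral_pos (ha : -1 < a) (hab : -1 < a + b) (hb : b ≤ 1) (hz : 0 ≤ z) :
    0 < tricomiIntegral a b z := by
  rw [tricomiIntegral, setIntegral_pos_iff_support_of_nonneg_ae
    (ae_restrict_of_forall_mem measurableSet_Ioi fun s hs => (tricomiKernel_pos hz hs).le)
    (integrableOn_tricomiKernel ha hab hb hz)]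
  have hsupp : (Function.support fun s => tricomiKernel a b z s) ∩ Ioi 0 = Ioi 0 :=
    inter_eq_right.2 fun s hs => (tricomiKernel_pos hz hs).ne'
  rw [hsupp, volume_Ioi]
  exact ENNReal.zero_lt_top

lemma tricomiIntegral_le (ha : -1 < a) (hab : -1 < a + b) (hb : b ≤ 1) (hz : 0 ≤ z) :
    tricomiIntegral a b z ≤ Gamma (a + b + 1) + (1 + z) * Gamma (a + 1) + Gamma (a + 2) := by
  have h₀ := integrableOn_exp_neg_mul_rpow hab
  have h₁ := (integrableOn_exp_neg_mul_rpow ha).const_mul (1 + z)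
  have h₂ := integrableOn_exp_neg_mul_rpow (a := a + 1) (by linarith)
  calc tricomiIntegral a b z
      ≤ ∫ s in Ioi 0, (exp (-s) * s ^ (a + b) + (1 + z) * (exp (-s) * s ^ a)
          + exp (-s) * s ^ (a + 1)) := by
        refine setIntegral_mono_on (integrableOn_tricomiKernel ha hab hb hz) ((h₀.add h₁).add h₂)
          measurableSet_Ioi fun s (hs : 0 < s) => ?_
        refine (tricomiKernel_le hs hs (by linarith) hb).trans_eq ?_
        rw [rpow_add hs a b]
        ring
    _ = Gamma (a + b + 1) + (1 + z) * Gamma (a + 1) + Gamma (a + 2) := by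
        rw [integral_add (f := fun s => exp (-s) * s ^ (a + b) + (1 + z) * (exp (-s) * s ^ a))
          (h₀.add h₁) h₂, integral_add h₀ h₁, integral_const_mul,
          integral_exp_neg_mul_rpow_eq_Gamma hab, integral_exp_neg_mul_rpow_eq_Gamma ha,
          integral_exp_neg_mul_rpow_eq_Gamma (by linarith), add_assoc a 1 1, one_add_one_eq_two]

lemma continuousWithinAt_tricomiIntegral_zero (ha : -1 < a) (hab : -1 < a + b) (hb : b ≤ 1) :
    ContinuousWithinAt (tricomiIntegral a b) (Ici 0) 0 := by
  refine continuousWithinAt_of_dominated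
    (bound := fun s => exp (-s) * s ^ (a + b) + 2 * (exp (-s) * s ^ a) + exp (-s) * s ^ (a + 1))
    ?_ ?_ ?_ ?_
  · filter_upwards [self_mem_nhdsWithin] with x hx
    exact aestronglyMeasurable_tricomiKernel hx
  · filter_upwards [self_mem_nhdsWithin, nhdsWithin_le_nhds (eventually_lt_nhds one_pos)]
      with x (hx : 0 ≤ x) hx₁
    filter_upwards [ae_restrict_mem measurableSet_Ioi] with s (hs : 0 < s)
    rw [norm_of_nonneg (tricomiKernel_pos hx hs).le]
    refine (tricomiKernel_le hs hs (by linarith) hb).trans ?_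
    rw [rpow_add hs a b]
    nlinarith [show 0 ≤ exp (-s) * s ^ a by positivity]
  · exact ((integrableOn_exp_neg_mul_rpow hab).add
      ((integrableOn_exp_neg_mul_rpow ha).const_mul 2)).add
      (integrableOn_exp_neg_mul_rpow (a := a + 1) (by linarith))
  · filter_upwards [ae_restrict_mem measurableSet_Ioi] with s (hs : 0 < s)
    exact (hasDerivAt_tricomiKernel (z := 0) (by linarith)).continuousAt.continuousWithinAt

lemma hasDerivAt_tricomiIntegral (ha : -1 < a) (hb : b ≤ 1) (hz : 0 < z) :
    HasDerivAt (tricomiIntegral a b) (b * tricomiIntegral a (b - 1) z) z := by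
  have hball : ∀ x ∈ Metric.ball z (z / 2), z / 2 ≤ x := fun x hx => by
    linarith [(abs_lt.1 (Metric.mem_ball.1 hx)).1]
  have key := hasDerivAt_integral_of_dominated_loc_of_deriv_le (μ := volume.restrict (Ioi 0))
    (F := fun x s => tricomiKernel a b x s) (F' := fun x s => b * tricomiKernel a (b - 1) x s)
    (bound := fun s => |b| * tricomiKernel a (b - 1) (z / 2) s)
    (Metric.ball_mem_nhds z (half_pos hz)) ?_ (integrableOn_tricomiKernel_of_pos ha hb hz)
    ((aestronglyMeasurable_tricomiKernel hz.le).const_mul b) ?_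
    ((integrableOn_tricomiKernel_of_pos ha (by linarith) (half_pos hz)).const_mul _) ?_
  · have := key.2
    rw [integral_const_mul] at this
    exact this
  · filter_upwards [eventually_gt_nhds hz] with x hx
    exact aestronglyMeasurable_tricomiKernel hx.le
  · filter_upwards [ae_restrict_mem measurableSet_Ioi] with s (hs : 0 < s) x hx
    rw [norm_mul, norm_eq_abs, norm_of_nonneg (tricomiKernel_pos (by linarith [hball x hx]) hs).le]
    exact mul_le_mul_of_nonneg_left (tricomiKernel_le_tricomiKernel (by linarith) hs (half_pos hz).le
      (hball x hx)) (abs_nonneg b)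
  · filter_upwards [ae_restrict_mem measurableSet_Ioi] with s (hs : 0 < s) x hx
    exact hasDerivAt_tricomiKernel (by linarith [hball x hx])

end Integral

section Recurrence

variable {a b z : ℝ}

lemma tricomiIntegral_eq (ha : -1 < a) (hb : b ≤ 1) (hz : 0 < z) :
    tricomiIntegral a b z = (z + a + b) * tricomiIntegral a (b - 1) z
      + (1 - b) * z * tricomiIntegral a (b - 2) z := by
  have i₀ := integrableOn_tricomiKernel_of_pos ha hb hz
  have i₁ := (integrableOn_tricomiKernel_of_pos ha (by linarith : b - 1 ≤ 1) hz).const_mul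
    (z + a + b)
  have i₂ := (integrableOn_tricomiKernel_of_pos ha (by linarith : b - 2 ≤ 1) hz).const_mul
    ((1 - b) * z)
  have hcont : ContinuousWithinAt (tricomiKernel (a + 1) (b - 1) z) (Ici 0) 0 := by
    refine ContinuousAt.continuousWithinAt ?_
    unfold tricomiKernel
    exact ((continuous_exp.comp continuous_neg).continuousAt.mul
      (continuousAt_rpow_const _ _ (Or.inr (by linarith)))).mul
      ((continuousAt_id.const_add z).rpow_const (Or.inl (by simpa using hz.ne')))
  have htop : Tendsto (tricomiKernel (a + 1) (b - 1) z) atTop (𝓝 0) := by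
    have hlim := (tendsto_rpow_mul_exp_neg_mul_atTop_nhds_zero (a + 1) 1 one_pos).mul_const
      (z ^ (b - 1))
    rw [zero_mul] at hlim
    refine squeeze_zero' (eventually_gt_atTop 0 |>.mono fun s hs =>
      (tricomiKernel_pos hz.le hs).le) (eventually_gt_atTop 0 |>.mono fun s hs => ?_) hlim
    have := rpow_le_rpow_of_nonpos hz (by linarith : z ≤ z + s) (by linarith : b - 1 ≤ 0)
    calc tricomiKernel (a + 1) (b - 1) z s ≤ exp (-s) * s ^ (a + 1) * z ^ (b - 1) :=
          mul_le_mul_of_nonneg_left this (by positivity)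
      _ = s ^ (a + 1) * exp (-1 * s) * z ^ (b - 1) := by ring_nf
  have hibp := integral_Ioi_of_hasDerivAt_of_tendsto hcont
    (fun s (hs : 0 < s) => hasDerivAt_tricomiKernel_add_one_sub_one hs (by linarith))
    ((i₀.neg.add i₁).add i₂) htop
  have hF₀ : tricomiKernel (a + 1) (b - 1) z 0 = 0 := by
    simp [tricomiKernel, zero_rpow (by linarith : a + 1 ≠ 0)]
  rw [hF₀, sub_zero, integral_add (f := fun s =>
      -tricomiKernel a b z s + (z + a + b) * tricomiKernel a (b - 1) z s) (i₀.neg.add i₁) i₂,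
    integral_add (f := fun s => -tricomiKernel a b z s) i₀.neg i₁, integral_neg,
    integral_const_mul, integral_const_mul] at hibp
  simp only [tricomiIntegral]
  linarith

end Recurrence

lemma contDiffOn_tricomiIntegral {a : ℝ} (ha : -1 < a) (n : ℕ) :
    ∀ {b : ℝ}, b ≤ 1 → ContDiffOn ℝ n (tricomiIntegral a b) (Ioi 0) := by
  induction n with
  | zero =>
    intro b hb
    exact contDiffOn_zero.2 fun z hz =>
      (hasDerivAt_tricomiIntegral ha hb hz).continuousAt.continuousWithinAt
  | succ n ih =>
    intro b hb
    rw [Nat.cast_succ, contDiffOn_succ_iff_deriv_of_isOpen isOpen_Ioi]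
    refine ⟨fun z hz => (hasDerivAt_tricomiIntegral ha hb hz).differentiableAt.differentiableWithinAt,
      by simp, ?_⟩
    exact (contDiffOn_const.mul (ih (by linarith : b - 1 ≤ 1))).congr fun z hz =>
      (hasDerivAt_tricomiIntegral ha hb hz).deriv

lemma hasDerivAt_exp_neg_mul_tricomiIntegral {a b z : ℝ} (ha : -1 < a) (hb : b ≤ 1) (hz : 0 < z) :
    HasDerivAt (fun y => exp (-y) * tricomiIntegral a b y)
      (exp (-z) * (b * tricomiIntegral a (b - 1) z - tricomiIntegral a b z)) z :=
  ((hasDerivAt_neg z).exp.mul (hasDerivAt_tricomiIntegral ha hb hz)).congr_deriv (by ring)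

section Profile

variable {γ z : ℝ}

lemma heatProfile_zero (hγ : γ < 1) : heatProfile γ 0 = 1 := by
  rw [heatProfile, tricomiIntegral_zero (by linarith), neg_zero, exp_zero, one_mul,
    show -(γ / 2) + -(γ / 2) + 1 = 1 - γ by ring]
  exact div_self (Gamma_pos_of_pos (by linarith)).ne'

lemma heatProfile_pos (hγ₁ : -2 ≤ γ) (hγ₂ : γ < 1) (hz : 0 ≤ z) : 0 < heatProfile γ z := by
  have hJ := tricomiIntegral_pos (a := -(γ / 2)) (b := -(γ / 2)) (by linarith) (by linarith)
    (by linarith) hz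
  have hΓ := Gamma_pos_of_pos (show 0 < 1 - γ by linarith)
  unfold heatProfile
  positivity

lemma heatProfile_le (hγ₁ : -2 ≤ γ) (hγ₂ : γ < 1) (hz : 0 ≤ z) :
    heatProfile γ z ≤ (Gamma (1 - γ) + Gamma (1 - γ / 2) + Gamma (2 - γ / 2)) / Gamma (1 - γ) := by
  have hJ := tricomiIntegral_le (a := -(γ / 2)) (b := -(γ / 2)) (z := z) (by linarith)
    (by linarith) (by linarith) hz
  rw [show -(γ / 2) + -(γ / 2) + 1 = 1 - γ by ring, show -(γ / 2) + 1 = 1 - γ / 2 by ring,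
    show -(γ / 2) + 2 = 2 - γ / 2 by ring] at hJ
  have hΓ := Gamma_pos_of_pos (show 0 < 1 - γ by linarith)
  have hΓ₁ := Gamma_pos_of_pos (show 0 < 1 - γ / 2 by linarith)
  have hΓ₂ := Gamma_pos_of_pos (show 0 < 2 - γ / 2 by linarith)
  have he : exp (-z) ≤ 1 := exp_le_one_iff.2 (by linarith)
  have he' : (1 + z) * exp (-z) ≤ 1 := by
    rw [exp_neg, ← div_eq_mul_inv, div_le_one (exp_pos z)]
    linarith [add_one_le_exp z]
  unfold heatProfile
  gcongr
  calc exp (-z) * tricomiIntegral (-(γ / 2)) (-(γ / 2)) z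
      ≤ exp (-z) * (Gamma (1 - γ) + (1 + z) * Gamma (1 - γ / 2) + Gamma (2 - γ / 2)) :=
        mul_le_mul_of_nonneg_left hJ (exp_pos _).le
    _ = exp (-z) * Gamma (1 - γ) + (1 + z) * exp (-z) * Gamma (1 - γ / 2)
          + exp (-z) * Gamma (2 - γ / 2) := by ring
    _ ≤ Gamma (1 - γ) + Gamma (1 - γ / 2) + Gamma (2 - γ / 2) := by
        gcongr <;> exact mul_le_of_le_one_left (by positivity) ‹_›

lemma continuousOn_heatProfile (hγ₁ : -2 ≤ γ) (hγ₂ : γ < 1) :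
    ContinuousOn (heatProfile γ) (Ici 0) := by
  intro z (hz : 0 ≤ z)
  rcases hz.eq_or_lt with rfl | hz
  · exact ((continuous_exp.comp continuous_neg).continuousWithinAt.mul
      (continuousWithinAt_tricomiIntegral_zero (by linarith) (by linarith) (by linarith))).div_const _
  · exact (((continuous_exp.comp continuous_neg).continuousAt.mul
      (hasDerivAt_tricomiIntegral (by linarith) (by linarith) hz).continuousAt).div_const
      _).continuousWithinAt

lemma contDiffOn_heatProfile (hγ₁ : -2 ≤ γ) (hγ₂ : γ < 2) :
    ContDiffOn ℝ 2 (heatProfile γ) (Ioi 0) :=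
  ((contDiff_neg.exp).contDiffOn.mul
    (contDiffOn_tricomiIntegral (by linarith) 2 (by linarith))).div_const _

lemma heatProfile_ode (hγ₁ : -2 ≤ γ) (hγ₂ : γ < 2) (hz : 0 < z) :
    deriv (deriv (heatProfile γ)) z + (γ / z + 1) * deriv (heatProfile γ) z
      + (γ / (2 * z)) * heatProfile γ z = 0 := by
  obtain ⟨c, rfl⟩ : ∃ c, γ = -2 * c := ⟨-(γ / 2), by ring⟩
  have ha : -1 < c := by linarith
  have hb : c ≤ 1 := by linarith
  set G := Gamma (1 - -2 * c)
  have hprof : heatProfile (-2 * c) = fun y => exp (-y) * tricomiIntegral c c y / G := by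
    funext y
    rw [heatProfile, show -(-2 * c / 2) = c by ring]
  have h₁ : ∀ y, 0 < y → HasDerivAt (heatProfile (-2 * c))
      ((c * (exp (-y) * tricomiIntegral c (c - 1) y) - exp (-y) * tricomiIntegral c c y) / G) y :=
    fun y hy => hprof ▸
      ((hasDerivAt_exp_neg_mul_tricomiIntegral ha hb hy).div_const G).congr_deriv (by ring)
  have hd₁ : deriv (heatProfile (-2 * c)) =ᶠ[𝓝 z] fun y =>
      (c * (exp (-y) * tricomiIntegral c (c - 1) y) - exp (-y) * tricomiIntegral c c y) / G :=
    (eventually_gt_nhds hz).mono fun y hy => (h₁ y hy).deriv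
  have h₂ : HasDerivAt (fun y =>
      (c * (exp (-y) * tricomiIntegral c (c - 1) y) - exp (-y) * tricomiIntegral c c y) / G) _ z :=
    (((hasDerivAt_exp_neg_mul_tricomiIntegral ha (by linarith : c - 1 ≤ 1)
      hz).const_mul c).sub (hasDerivAt_exp_neg_mul_tricomiIntegral ha hb hz)).div_const G
  rw [hd₁.deriv_eq, h₂.deriv, (h₁ z hz).deriv, hprof, show c - 1 - 1 = c - 2 by ring]
  have hrec := tricomiIntegral_eq ha hb hz
  field_simp
  linear_combination (exp (-z) * c / G) * hrec

end Profile

theorem stmt_13 (γ : ℝ) (hγ : γ ∈ Set.Ioo (-1 : ℝ) 1) :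
    ∃ h : ℝ → ℝ,
      ContinuousOn h (Set.Ici 0) ∧
      ContDiffOn ℝ 2 h (Set.Ioi 0) ∧
      (∀ z : ℝ, 0 ≤ z → 0 < h z) ∧
      (∃ B : ℝ, ∀ z : ℝ, 0 ≤ z → h z ≤ B) ∧
      h 0 = 1 ∧
      (∀ z : ℝ, 0 < z →
        deriv (deriv h) z + (γ / z + 1) * deriv h z + (γ / (2 * z)) * h z = 0) := by
  obtain ⟨hγ₁, hγ₂⟩ := hγ
  have hγ₁' : -2 ≤ γ := by linarith
  exact ⟨heatProfile γ, continuousOn_heatProfile hγ₁' hγ₂,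
    contDiffOn_heatProfile hγ₁' (by linarith), fun z => heatProfile_pos hγ₁' hγ₂,
    ⟨_, fun z => heatProfile_le hγ₁' hγ₂⟩, heatProfile_zero hγ₂,
    fun z => heatProfile_ode hγ₁' (by linarith)⟩
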